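/- arXiv:1605.03738 — 4 statements merged into one kernel-verified Lean document; each statement's English description precedes it below -/
import Mathlib

section
/- One iteration of the incremental subgradient method: Let f_1,…,f_K : H → [0,∞) be convex continuous functions on a real Hilbert space H, C ⊂ H nonempty closed convex, and suppose for each i there is M_i > 0 with ‖g‖ ≤ M_i for all x ∈ C and g ∈ ∂f_i(x). Set M := ∑_i M_i. Given x ∈ C, step-sizes λ_i ∈ [λ̲, λ̄] ⊂ (0,∞), define y_0 := x and y_i := P_C(y_{i−1} − λ_i g_i) where g_i ∈ ∂f_i(y_{i−1}). Then for all y ∈ C: ‖y_K − y‖² ≤ ‖x − y‖² − 2∑_{i=1}^K λ_i (f_i(x) − f_i(y)) + λ̄² M². -/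
/-!
By nonexpansiveness of `P_C` and the subgradient inequality at `y_{i-1}`,
`‖y_i - y‖² ≤ ‖y_{i-1} - y‖² - 2λ_i (f_i(y_{i-1}) - f_i(y)) + λ̄² M_i²`.
To replace `f_i(y_{i-1})` by `f_i(x)`, use a subgradient of `f_i` at `x` (it exists by
Hahn–Banach and has norm `≤ M_i`): `f_i(x) - f_i(y_{i-1}) ≤ M_i ‖x - y_{i-1}‖`, and
`‖x - y_{i-1}‖ ≤ λ̄ (M_1 + ⋯ + M_{i-1})` since each step moves by at most `λ̄ M_j`.
The error terms `2 λ̄² M_i (M_1 + ⋯ + M_{i-1}) + λ̄² M_i²` telescope to `λ̄² M²`.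
-/

open Filter Topology Finset InnerProductSpace

/-- `g` is a subgradient of `f` at `x`. -/
def IsSubgrad {H : Type*} [NormedAddCommGroup H] [InnerProductSpace ℝ H]
    (f : H → ℝ) (x g : H) : Prop :=
  ∀ z : H, f x + ⟪z - x, g⟫_ℝ ≤ f z

theorem Finset.sum_Icc_one_eq_sum_range {M : Type*} [AddCommMonoid M] (h : ℕ → M) (K : ℕ) :
    ∑ i ∈ Icc 1 K, h i = ∑ i ∈ range K, h (i + 1) := by
  rw [range_eq_Ico, sum_Ico_add' h, ← Ico_add_one_right_eq_Icc]

/-- With `S n = ∑ i < n, b i`, the error terms are `2 b n S n + b n ^ 2 = S (n+1) ^ 2 - S n ^ 2`,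
so they telescope. -/
theorem le_sub_two_mul_sum_add_sq_sum_of_succ_le {d a b : ℕ → ℝ} {K : ℕ}
    (h : ∀ n < K, d (n + 1) ≤ d n - 2 * a n + 2 * b n * ∑ i ∈ range n, b i + b n ^ 2) :
    d K ≤ d 0 - 2 * ∑ i ∈ range K, a i + (∑ i ∈ range K, b i) ^ 2 := by
  induction K with
  | zero => simp
  | succ K ih =>
    rw [sum_range_succ, sum_range_succ]
    linear_combination h K K.lt_succ_self + ih fun n hn => h n (hn.trans K.lt_succ_self)

/-- Separate `(x, f x)` from the open convex strict epigraph; the separating functional `φ` is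
not vertical (`φ (0, 1) < 0`), and rescaling its horizontal part gives the supporting
functional. -/
theorem ConvexOn.exists_forall_add_le {E : Type*} [NormedAddCommGroup E] [NormedSpace ℝ E]
    {f : E → ℝ} (hconv : ConvexOn ℝ Set.univ f) (hcont : Continuous f) (x : E) :
    ∃ L : StrongDual ℝ E, ∀ z, f x + L (z - x) ≤ f z := by
  have hopen : IsOpen {p : E × ℝ | p.1 ∈ Set.univ ∧ f p.1 < p.2} := by
    simpa only [Set.mem_univ, true_and] using isOpen_lt (by fun_prop) continuous_snd
  obtain ⟨φ, hφ⟩ := geometric_hahn_banach_open_point hconv.convex_strict_epigraph hopen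
    (x := (x, f x)) (by simp)
  set c := φ (0, 1)
  have hsplit (u : E) (t : ℝ) : φ (u, t) = φ (u, 0) + t * c := by
    rw [← smul_eq_mul, ← map_smul, ← map_add, Prod.smul_mk, Prod.mk_add_mk]; simp
  have hc : c < 0 := by
    have := hφ (x, f x + 1) ⟨trivial, lt_add_one _⟩
    rw [hsplit, hsplit x (f x)] at this
    linarith
  refine ⟨-c⁻¹ • φ.comp (.inl ℝ E ℝ), fun z => le_of_forall_gt fun t ht => ?_⟩
  have hsep := hφ (z, t) ⟨trivial, ht⟩
  rw [hsplit, hsplit x (f x)] at hsep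
  have hsub : φ (z - x, 0) = φ (z, 0) - φ (x, 0) := by
    rw [← map_sub, Prod.mk_sub_mk, sub_zero]
  have hcinv : 0 < -c⁻¹ := neg_pos.mpr (inv_lt_zero.mpr hc)
  calc f x + (-c⁻¹ • φ.comp (.inl ℝ E ℝ)) (z - x) = f x + -c⁻¹ * (φ (z, 0) - φ (x, 0)) := by
        simp [hsub]
    _ < f x + -c⁻¹ * ((f x - t) * c) := by gcongr; linarith
    _ = t := by field_simp [hc.ne]; ring

section InnerProductSpace

variable {H : Type*} [NormedAddCommGroup H] [InnerProductSpace ℝ H]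

theorem exists_isSubgrad [CompleteSpace H] {f : H → ℝ} (hconv : ConvexOn ℝ Set.univ f)
    (hcont : Continuous f) (x : H) : ∃ g : H, IsSubgrad f x g := by
  obtain ⟨L, hL⟩ := hconv.exists_forall_add_le hcont x
  refine ⟨(toDual ℝ H).symm L, fun z => ?_⟩
  rw [real_inner_comm, toDual_symm_apply]
  exact hL z

namespace IsSubgrad

variable {f : H → ℝ} {x g : H}

theorem sub_le_inner (hg : IsSubgrad f x g) (z : H) : f x - f z ≤ ⟪x - z, g⟫_ℝ := by
  have := hg z
  rw [← neg_sub, inner_neg_left] at this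
  linarith

theorem sub_le_mul_norm {M : ℝ} (hg : IsSubgrad f x g) (hgM : ‖g‖ ≤ M) (z : H) :
    f x - f z ≤ M * ‖x - z‖ :=
  calc f x - f z ≤ ⟪x - z, g⟫_ℝ := hg.sub_le_inner z
    _ ≤ ‖x - z‖ * ‖g‖ := real_inner_le_norm _ _
    _ ≤ M * ‖x - z‖ := by rw [mul_comm]; gcongr

end IsSubgrad

def IsMetricProjection (C : Set H) (u v : H) : Prop :=
  v ∈ C ∧ ∀ w ∈ C, ‖u - v‖ ≤ ‖u - w‖

namespace IsMetricProjection

variable {C : Set H} {u v z : H}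

theorem norm_sub_le (hC : Convex ℝ C) (hv : IsMetricProjection C u v) (hz : z ∈ C) :
    ‖v - z‖ ≤ ‖u - z‖ := by
  obtain ⟨hvC, hmin⟩ := hv
  have : Nonempty C := ⟨⟨v, hvC⟩⟩
  have hinf : ‖u - v‖ = ⨅ w : C, ‖u - w‖ :=
    le_antisymm (le_ciInf fun w => hmin w w.2)
      (ciInf_le ⟨0, Set.forall_mem_range.2 fun w : C => norm_nonneg (u - w)⟩ (⟨v, hvC⟩ : C))
  have hobtuse : ⟪u - v, z - v⟫_ℝ ≤ 0 :=
    (norm_eq_iInf_iff_real_inner_le_zero hC hvC).mp hinf z hz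
  have hexpand : ‖u - z‖ ^ 2 = ‖u - v‖ ^ 2 - 2 * ⟪u - v, z - v⟫_ℝ + ‖v - z‖ ^ 2 := by
    rw [← norm_sub_rev z v, ← norm_sub_sq_real, sub_sub_sub_cancel_right]
  exact (pow_le_pow_iff_left₀ (norm_nonneg _) (norm_nonneg _) two_ne_zero).mp
    (by linarith [sq_nonneg ‖u - v‖])

variable {l : ℝ} {y g : H}

theorem norm_sub_le_of_sub_smul (hC : Convex ℝ C) (hv : IsMetricProjection C (y - l • g) v)
    (hy : y ∈ C) (hl : 0 ≤ l) : ‖v - y‖ ≤ l * ‖g‖ :=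
  calc ‖v - y‖ ≤ ‖y - l • g - y‖ := hv.norm_sub_le hC hy
    _ = l * ‖g‖ := by rw [sub_sub_cancel_left, norm_neg, norm_smul, Real.norm_of_nonneg hl]

theorem norm_sub_sq_le_of_isSubgrad (hC : Convex ℝ C) {f : H → ℝ}
    (hv : IsMetricProjection C (y - l • g) v) (hg : IsSubgrad f y g) (hl : 0 ≤ l) (hz : z ∈ C) :
    ‖v - z‖ ^ 2 ≤ ‖y - z‖ ^ 2 - 2 * l * (f y - f z) + l ^ 2 * ‖g‖ ^ 2 := by
  have hinner := mul_le_mul_of_nonneg_left (hg.sub_le_inner z) hl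
  calc ‖v - z‖ ^ 2 ≤ ‖y - l • g - z‖ ^ 2 := by gcongr; exact hv.norm_sub_le hC hz
    _ = ‖y - z‖ ^ 2 - 2 * l * ⟪y - z, g⟫_ℝ + l ^ 2 * ‖g‖ ^ 2 := by
        rw [sub_right_comm, norm_sub_sq_real, real_inner_smul_right, norm_smul, mul_pow,
          Real.norm_eq_abs, sq_abs]
        ring
    _ ≤ ‖y - z‖ ^ 2 - 2 * l * (f y - f z) + l ^ 2 * ‖g‖ ^ 2 := by linarith

theorem norm_sub_sq_le_of_isSubgrad_of_near (hC : Convex ℝ C) {f : H → ℝ} {h M r : ℝ}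
    {x gx : H} (hv : IsMetricProjection C (y - l • g) v) (hg : IsSubgrad f y g)
    (hgM : ‖g‖ ≤ M) (hgx : IsSubgrad f x gx) (hgxM : ‖gx‖ ≤ M) (hl : l ∈ Set.Icc 0 h)
    (hxy : ‖x - y‖ ≤ r) (hz : z ∈ C) :
    ‖v - z‖ ^ 2 ≤ ‖y - z‖ ^ 2 - 2 * (l * (f x - f z)) + 2 * (h * M) * r + (h * M) ^ 2 := by
  have hM : 0 ≤ M := (norm_nonneg g).trans hgM
  have hdescent := hv.norm_sub_sq_le_of_isSubgrad hC hg hl.1 hz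
  have hlip : l * (f x - f y) ≤ h * M * r :=
    calc l * (f x - f y) ≤ l * (M * ‖x - y‖) := by
          gcongr; exacts [hl.1, hgx.sub_le_mul_norm hgxM y]
      _ ≤ h * (M * r) := mul_le_mul hl.2 (by gcongr) (by positivity) (hl.1.trans hl.2)
      _ = h * M * r := by ring
  have hsq : l ^ 2 * ‖g‖ ^ 2 ≤ (h * M) ^ 2 := by rw [mul_pow]; gcongr; exacts [hl.1, hl.2]
  linarith

end IsMetricProjection

end InnerProductSpace

theorem incremental_step_inequality_general {H : Type*} [NormedAddCommGroup H] [InnerProductSpace ℝ H]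
    [CompleteSpace H] (C : Set H) (hCcv : Convex ℝ C)
    (P : H → H) (hP : ∀ u : H, P u ∈ C ∧ ∀ z ∈ C, ‖u - P u‖ ≤ ‖u - z‖)
    (K : ℕ)
    (f : ℕ → H → ℝ)
    (hfconv : ∀ i, ConvexOn ℝ Set.univ (f i)) (hfcont : ∀ i, Continuous (f i))
    (Mi : ℕ → ℝ)
    (hbdd : ∀ i, 1 ≤ i → i ≤ K → ∀ x ∈ C, ∀ g : H, IsSubgrad (f i) x g → ‖g‖ ≤ Mi i)
    (lo hi : ℝ) (hlo : 0 < lo) (hlohi : lo ≤ hi)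
    (x : H) (hx : x ∈ C)
    (lam : ℕ → ℝ) (hlam : ∀ i, 1 ≤ i → i ≤ K → lam i ∈ Set.Icc lo hi)
    (g : ℕ → H) (y : ℕ → H) (hy0 : y 0 = x)
    (hrec : ∀ i, 1 ≤ i → i ≤ K →
      IsSubgrad (f i) (y (i - 1)) (g i) ∧ y i = P (y (i - 1) - lam i • g i)) :
    ∀ z ∈ C,
      ‖y K - z‖ ^ 2 ≤ ‖x - z‖ ^ 2 - 2 * ∑ i ∈ Finset.Icc 1 K, lam i * (f i x - f i z) +
        hi ^ 2 * (∑ i ∈ Finset.Icc 1 K, Mi i) ^ 2 := by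
  intro z hz
  have hstep (n : ℕ) (hn : n < K) :
      IsSubgrad (f (n + 1)) (y n) (g (n + 1)) ∧ y (n + 1) = P (y n - lam (n + 1) • g (n + 1)) := by
    simpa using hrec (n + 1) (by omega) hn
  have hlam' (n : ℕ) (hn : n < K) : lam (n + 1) ∈ Set.Icc 0 hi :=
    Set.Icc_subset_Icc_left hlo.le (hlam (n + 1) (by omega) hn)
  have hyC (n : ℕ) (hn : n ≤ K) : y n ∈ C := by
    cases n with
    | zero => exact hy0 ▸ hx
    | succ n => exact (hstep n hn).2 ▸ (hP _).1
  have hgM (n : ℕ) (hn : n < K) : ‖g (n + 1)‖ ≤ Mi (n + 1) :=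
    hbdd _ (by omega) hn _ (hyC n hn.le) _ (hstep n hn).1
  have hdist (n : ℕ) (hn : n ≤ K) : ‖x - y n‖ ≤ ∑ i ∈ range n, hi * Mi (i + 1) := by
    rw [← hy0, ← dist_eq_norm]
    refine dist_le_range_sum_of_dist_le n fun {k} hk => ?_
    rw [dist_comm, dist_eq_norm, (hstep k (by omega)).2]
    exact (IsMetricProjection.norm_sub_le_of_sub_smul hCcv (hP _) (hyC k (by omega))
      (hlam' k (by omega)).1).trans <|
        mul_le_mul (hlam' k (by omega)).2 (hgM k (by omega)) (norm_nonneg _) (hlo.le.trans hlohi)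
  have key := le_sub_two_mul_sum_add_sq_sum_of_succ_le (d := fun n => ‖y n - z‖ ^ 2)
    (a := fun i => lam (i + 1) * (f (i + 1) x - f (i + 1) z)) (b := fun i => hi * Mi (i + 1))
    (K := K) fun n hn => by
      obtain ⟨gx, hgx⟩ := exists_isSubgrad (hfconv (n + 1)) (hfcont (n + 1)) x
      obtain ⟨hsub, hy⟩ := hstep n hn
      simp only [hy]
      exact IsMetricProjection.norm_sub_sq_le_of_isSubgrad_of_near hCcv (hP _) hsub (hgM n hn)
        hgx (hbdd _ (by omega) hn x hx gx hgx) (hlam' n hn) (hdist n hn.le) hz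
  rw [sum_Icc_one_eq_sum_range, sum_Icc_one_eq_sum_range, ← mul_pow, mul_sum _ _ hi]
  simpa only [hy0] using key

theorem incremental_step_inequality {H : Type*} [NormedAddCommGroup H] [InnerProductSpace ℝ H]
    [CompleteSpace H] (C : Set H) (hCne : C.Nonempty) (hCcl : IsClosed C) (hCcv : Convex ℝ C)
    (P : H → H) (hP : ∀ u : H, P u ∈ C ∧ ∀ z ∈ C, ‖u - P u‖ ≤ ‖u - z‖)
    (K : ℕ) (hK : 0 < K)
    (f : ℕ → H → ℝ) (hfnn : ∀ i x, 0 ≤ f i x)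
    (hfconv : ∀ i, ConvexOn ℝ Set.univ (f i)) (hfcont : ∀ i, Continuous (f i))
    (Mi : ℕ → ℝ) (hMi : ∀ i, 0 < Mi i)
    (hbdd : ∀ i, 1 ≤ i → i ≤ K → ∀ x ∈ C, ∀ g : H, IsSubgrad (f i) x g → ‖g‖ ≤ Mi i)
    (lo hi : ℝ) (hlo : 0 < lo) (hlohi : lo ≤ hi)
    (x : H) (hx : x ∈ C)
    (lam : ℕ → ℝ) (hlam : ∀ i, 1 ≤ i → i ≤ K → lam i ∈ Set.Icc lo hi)
    (g : ℕ → H) (y : ℕ → H) (hy0 : y 0 = x)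
    (hrec : ∀ i, 1 ≤ i → i ≤ K →
      IsSubgrad (f i) (y (i - 1)) (g i) ∧ y i = P (y (i - 1) - lam i • g i)) :
    ∀ z ∈ C,
      ‖y K - z‖ ^ 2 ≤ ‖x - z‖ ^ 2 - 2 * ∑ i ∈ Finset.Icc 1 K, lam i * (f i x - f i z) +
        hi ^ 2 * (∑ i ∈ Finset.Icc 1 K, Mi i) ^ 2 :=
  incremental_step_inequality_general C hCcv P hP K f hfconv hfcont Mi hbdd lo hi hlo hlohi x hx lam
    hlam g y hy0 hrec
end

section
/- One iteration of the parallel subgradient method: Let f_1,…,f_K : H → [0,∞) be convex continuous on a real Hilbert space H, C ⊂ H nonempty closed convex, with ‖g‖ ≤ M_i for all x ∈ C, g ∈ ∂f_i(x), and M := ∑_i M_i. Given x ∈ C and λ_i ∈ [λ̲, λ̄] ⊂ (0,∞), define y_i := P_C(x − λ_i g_i) with g_i ∈ ∂f_i(x), and x⁺ := (1/K) ∑_{i=1}^K y_i. Then for all y ∈ C: ‖x⁺ − y‖² ≤ ‖x − y‖² − (2/K) ∑_{i=1}^K λ_i (f_i(x) − f_i(y)) + λ̄² M². -/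
open Filter Topology Finset InnerProductSpace

/-!
Each agent's step `yᵢ = P_C(x - λᵢ gᵢ)` is a projected subgradient step: since
`‖P_C u - z‖ ≤ ‖u - z‖` for `z ∈ C` (variational inequality of the projection) and `gᵢ` is a
subgradient,
`‖yᵢ - z‖² ≤ ‖x - z‖² - 2λᵢ(fᵢ(x) - fᵢ(z)) + λ̄² Mᵢ²`. Averaging over `i` and using convexity of
`‖·‖²` (Cauchy–Schwarz on the sum) gives the claim, with `(1/K) ∑ Mᵢ² ≤ (∑ Mᵢ)²`.
-/

section

variable {H : Type*} [NormedAddCommGroup H] [InnerProductSpace ℝ H]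

theorem Convex.norm_sub_le_of_forall_norm_sub_le {C : Set H} (hC : Convex ℝ C) {u p z : H}
    (hp : p ∈ C) (hmin : ∀ w ∈ C, ‖u - p‖ ≤ ‖u - w‖) (hz : z ∈ C) : ‖p - z‖ ≤ ‖u - z‖ := by
  have : Nonempty C := ⟨⟨p, hp⟩⟩
  have hinf : ‖u - p‖ = ⨅ w : C, ‖u - w‖ :=
    le_antisymm (le_ciInf fun w => hmin w w.2)
      (ciInf_le (f := fun w : C => ‖u - w‖) ⟨0, by rintro r ⟨w, rfl⟩; exact norm_nonneg _⟩
        ⟨p, hp⟩)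
  have hvar : ⟪u - p, z - p⟫_ℝ ≤ 0 := (norm_eq_iInf_iff_real_inner_le_zero hC hp).mp hinf z hz
  have hsq : ‖u - z‖ ^ 2 = ‖u - p‖ ^ 2 - 2 * ⟪u - p, z - p⟫_ℝ + ‖p - z‖ ^ 2 := by
    rw [show u - z = (u - p) - (z - p) by abel, norm_sub_sq_real, norm_sub_rev z p]
  refine (pow_le_pow_iff_left₀ (norm_nonneg _) (norm_nonneg _) two_ne_zero).mp ?_
  nlinarith [sq_nonneg ‖u - p‖]

theorem IsSubgrad.sub_le_inner_s7 {f : H → ℝ} {x g : H} (hg : IsSubgrad f x g) (z : H) :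
    f x - f z ≤ ⟪x - z, g⟫_ℝ := by
  have := hg z
  rw [← neg_sub x z, inner_neg_left] at this
  linarith

theorem IsSubgrad.norm_sub_smul_sub_sq_le {f : H → ℝ} {x g : H} (hg : IsSubgrad f x g)
    {t : ℝ} (ht : 0 ≤ t) (z : H) :
    ‖x - t • g - z‖ ^ 2 ≤ ‖x - z‖ ^ 2 - 2 * (t * (f x - f z)) + t ^ 2 * ‖g‖ ^ 2 := by
  have hexp : ‖x - t • g - z‖ ^ 2 = ‖x - z‖ ^ 2 - 2 * (t * ⟪x - z, g⟫_ℝ) + t ^ 2 * ‖g‖ ^ 2 := by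
    rw [sub_right_comm, norm_sub_sq_real, real_inner_smul_right, norm_smul, Real.norm_eq_abs,
      mul_pow, sq_abs]
  rw [hexp]
  have := mul_le_mul_of_nonneg_left (hg.sub_le_inner_s7 z) ht
  linarith

theorem IsSubgrad.norm_projection_step_sub_sq_le {C : Set H} (hC : Convex ℝ C) {f : H → ℝ}
    {x g p z : H} (hg : IsSubgrad f x g) {t T M : ℝ} (ht : 0 ≤ t) (htT : t ≤ T) (hgM : ‖g‖ ≤ M)
    (hp : p ∈ C) (hmin : ∀ w ∈ C, ‖x - t • g - p‖ ≤ ‖x - t • g - w‖) (hz : z ∈ C) :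
    ‖p - z‖ ^ 2 ≤ ‖x - z‖ ^ 2 - 2 * (t * (f x - f z)) + T ^ 2 * M ^ 2 := by
  have hproj : ‖p - z‖ ^ 2 ≤ ‖x - t • g - z‖ ^ 2 := by
    gcongr
    exact hC.norm_sub_le_of_forall_norm_sub_le hp hmin hz
  have hstep : t ^ 2 * ‖g‖ ^ 2 ≤ T ^ 2 * M ^ 2 := by gcongr
  linarith [hg.norm_sub_smul_sub_sq_le ht z]

theorem norm_inv_card_smul_sum_sub_sq_le {ι : Type*} {s : Finset ι} (hs : s.Nonempty)
    (y : ι → H) (z : H) :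
    ‖(#s : ℝ)⁻¹ • ∑ i ∈ s, y i - z‖ ^ 2 ≤ (#s : ℝ)⁻¹ * ∑ i ∈ s, ‖y i - z‖ ^ 2 := by
  have hcard : (#s : ℝ) ≠ 0 := by exact_mod_cast hs.card_ne_zero
  have hsub : (#s : ℝ)⁻¹ • ∑ i ∈ s, y i - z = (#s : ℝ)⁻¹ • ∑ i ∈ s, (y i - z) := by
    rw [sum_sub_distrib, sum_const, smul_sub, ← Nat.cast_smul_eq_nsmul ℝ, smul_smul,
      inv_mul_cancel₀ hcard, one_smul]
  have hcs : ‖∑ i ∈ s, (y i - z)‖ ^ 2 ≤ #s * ∑ i ∈ s, ‖y i - z‖ ^ 2 :=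
    (pow_le_pow_left₀ (norm_nonneg _) (norm_sum_le _ _) 2).trans (sq_sum_le_card_mul_sum_sq ..)
  calc ‖(#s : ℝ)⁻¹ • ∑ i ∈ s, y i - z‖ ^ 2
      = (#s : ℝ)⁻¹ ^ 2 * ‖∑ i ∈ s, (y i - z)‖ ^ 2 := by
        rw [hsub, norm_smul, mul_pow, Real.norm_eq_abs, sq_abs]
    _ ≤ (#s : ℝ)⁻¹ ^ 2 * (#s * ∑ i ∈ s, ‖y i - z‖ ^ 2) := by gcongr
    _ = (#s : ℝ)⁻¹ * ∑ i ∈ s, ‖y i - z‖ ^ 2 := by field_simp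

end

theorem parallel_step_inequality_general {H : Type*} [NormedAddCommGroup H] [InnerProductSpace ℝ H]
    (C : Set H) (hCcv : Convex ℝ C)
    (P : H → H) (hP : ∀ u : H, P u ∈ C ∧ ∀ z ∈ C, ‖u - P u‖ ≤ ‖u - z‖)
    (K : ℕ) (hK : 0 < K)
    (f : ℕ → H → ℝ)
    (Mi : ℕ → ℝ)
    (hbdd : ∀ i, 1 ≤ i → i ≤ K → ∀ x ∈ C, ∀ g : H, IsSubgrad (f i) x g → ‖g‖ ≤ Mi i)
    (lo hi : ℝ) (hlo : 0 < lo)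
    (x : H) (hx : x ∈ C)
    (lam : ℕ → ℝ) (hlam : ∀ i, 1 ≤ i → i ≤ K → lam i ∈ Set.Icc lo hi)
    (g : ℕ → H) (hg : ∀ i, 1 ≤ i → i ≤ K → IsSubgrad (f i) x (g i))
    (xplus : H) (hxplus : xplus = (K : ℝ)⁻¹ • ∑ i ∈ Finset.Icc 1 K, P (x - lam i • g i)) :
    ∀ z ∈ C,
      ‖xplus - z‖ ^ 2 ≤ ‖x - z‖ ^ 2 -
        (2 / (K : ℝ)) * ∑ i ∈ Finset.Icc 1 K, lam i * (f i x - f i z) +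
        hi ^ 2 * (∑ i ∈ Finset.Icc 1 K, Mi i) ^ 2 := by
  intro z hz
  have hcard : (#(Icc 1 K) : ℝ) = K := by simp
  have hstep : ∀ i ∈ Icc 1 K, ‖P (x - lam i • g i) - z‖ ^ 2 ≤
      ‖x - z‖ ^ 2 - 2 * (lam i * (f i x - f i z)) + hi ^ 2 * Mi i ^ 2 := by
    intro i hmem
    obtain ⟨h1, h2⟩ := mem_Icc.mp hmem
    obtain ⟨hlo_i, hhi_i⟩ := hlam i h1 h2
    exact (hg i h1 h2).norm_projection_step_sub_sq_le hCcv (hlo.le.trans hlo_i) hhi_i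
      (hbdd i h1 h2 x hx _ (hg i h1 h2)) (hP _).1 (hP _).2 hz
  have hM : ∑ i ∈ Icc 1 K, Mi i ^ 2 ≤ (∑ i ∈ Icc 1 K, Mi i) ^ 2 :=
    sum_sq_le_sq_sum_of_nonneg fun i hmem => by
      obtain ⟨h1, h2⟩ := mem_Icc.mp hmem
      exact (norm_nonneg _).trans (hbdd i h1 h2 x hx _ (hg i h1 h2))
  have hKinv : (K : ℝ)⁻¹ ≤ 1 := inv_le_one_of_one_le₀ (by exact_mod_cast hK)
  subst hxplus
  calc ‖(K : ℝ)⁻¹ • ∑ i ∈ Icc 1 K, P (x - lam i • g i) - z‖ ^ 2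
      ≤ (K : ℝ)⁻¹ * ∑ i ∈ Icc 1 K, ‖P (x - lam i • g i) - z‖ ^ 2 := by
        simpa only [hcard] using
          norm_inv_card_smul_sum_sub_sq_le (nonempty_Icc.mpr hK) (fun i => P (x - lam i • g i)) z
    _ ≤ (K : ℝ)⁻¹ * ∑ i ∈ Icc 1 K,
          (‖x - z‖ ^ 2 - 2 * (lam i * (f i x - f i z)) + hi ^ 2 * Mi i ^ 2) := by
        gcongr with i hmem
        exact hstep i hmem
    _ = ‖x - z‖ ^ 2 - (2 / (K : ℝ)) * ∑ i ∈ Icc 1 K, lam i * (f i x - f i z) +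
          (K : ℝ)⁻¹ * hi ^ 2 * ∑ i ∈ Icc 1 K, Mi i ^ 2 := by
        rw [sum_add_distrib, sum_sub_distrib, sum_const, ← mul_sum, ← mul_sum, nsmul_eq_mul,
          hcard]
        field_simp
    _ ≤ ‖x - z‖ ^ 2 - (2 / (K : ℝ)) * ∑ i ∈ Icc 1 K, lam i * (f i x - f i z) +
          1 * hi ^ 2 * (∑ i ∈ Icc 1 K, Mi i) ^ 2 := by
        gcongr
    _ = _ := by rw [one_mul]

theorem parallel_step_inequality {H : Type*} [NormedAddCommGroup H] [InnerProductSpace ℝ H]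
    [CompleteSpace H] (C : Set H) (hCne : C.Nonempty) (hCcl : IsClosed C) (hCcv : Convex ℝ C)
    (P : H → H) (hP : ∀ u : H, P u ∈ C ∧ ∀ z ∈ C, ‖u - P u‖ ≤ ‖u - z‖)
    (K : ℕ) (hK : 0 < K)
    (f : ℕ → H → ℝ) (hfnn : ∀ i x, 0 ≤ f i x)
    (hfconv : ∀ i, ConvexOn ℝ Set.univ (f i)) (hfcont : ∀ i, Continuous (f i))
    (Mi : ℕ → ℝ) (hMi : ∀ i, 0 < Mi i)
    (hbdd : ∀ i, 1 ≤ i → i ≤ K → ∀ x ∈ C, ∀ g : H, IsSubgrad (f i) x g → ‖g‖ ≤ Mi i)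
    (lo hi : ℝ) (hlo : 0 < lo) (hlohi : lo ≤ hi)
    (x : H) (hx : x ∈ C)
    (lam : ℕ → ℝ) (hlam : ∀ i, 1 ≤ i → i ≤ K → lam i ∈ Set.Icc lo hi)
    (g : ℕ → H) (hg : ∀ i, 1 ≤ i → i ≤ K → IsSubgrad (f i) x (g i))
    (xplus : H) (hxplus : xplus = (K : ℝ)⁻¹ • ∑ i ∈ Finset.Icc 1 K, P (x - lam i • g i)) :
    ∀ z ∈ C,
      ‖xplus - z‖ ^ 2 ≤ ‖x - z‖ ^ 2 -
        (2 / (K : ℝ)) * ∑ i ∈ Finset.Icc 1 K, lam i * (f i x - f i z) +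
        hi ^ 2 * (∑ i ∈ Finset.Icc 1 K, Mi i) ^ 2 :=
  parallel_step_inequality_general C hCcv P hP K hK f Mi hbdd lo hi hlo x hx lam hlam g hg xplus
    hxplus
end

section
/- Let f_1,…,f_K : H → [0,∞) be convex continuous, C ⊂ H nonempty closed convex with argmin_{x∈C} f(x) ≠ ∅ where f := ∑_i f_i, and M > 0. Let step-ranges [λ̲_n, λ̄_n] ⊂ (0,∞) satisfy ∑ λ̄_n = ∞, ∑ λ̄_n² < ∞, λ̲_n/λ̄_n → 1, and let λ_{n,i} ∈ [λ̲_n, λ̄_n]. Suppose {x_n} ⊂ C and there is α > 0 such that for every y ∈ C and all n, ‖x_{n+1} − y‖² ≤ ‖x_n − y‖² − 2α ∑_{i=1}^K λ_{n,i}(f_i(x_n) − f_i(y)) + λ̄_n² M². Then liminf_{n→∞} f(x_n) = min_{x∈C} f(x). -/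
open Filter Topology Finset

/-!
Since every `λₙ,ᵢ` lies in `[λ̲ₙ, λ̄ₙ]` and the `fᵢ` are nonnegative, the weighted gap
`∑ λₙ,ᵢ (fᵢ(xₙ) - fᵢ(ŷ))` is at least `λ̲ₙ (f(xₙ) - f(ŷ)) - (λ̄ₙ - λ̲ₙ) f(ŷ)`. If `f(xₙ) ≥ f(ŷ) + ε`
for all large `n`, then, because `λ̄ₙ / λ̲ₙ → 1`, this is at least `ε λ̲ₙ / 2` eventually, and the
descent inequality at `y = ŷ` telescopes to `∑ λ̲ₙ < ∞` (using `∑ λ̄ₙ² < ∞`). Then `∑ λ̄ₙ < ∞` too,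
a contradiction; so `f(xₙ)` comes within every `ε` of its lower bound `f(ŷ)` infinitely often.
-/

theorem eventually_le_one_add_mul_of_tendsto_div {ι : Type*} {l : Filter ι} {a b : ι → ℝ}
    (hb : ∀ i, 0 < b i) (h : Tendsto (fun i => a i / b i) l (𝓝 1)) {δ : ℝ} (hδ : 0 < δ) :
    ∀ᶠ i in l, b i ≤ (1 + δ) * a i := by
  have hlt : 1 / (1 + δ) < 1 := by rw [div_lt_one (by linarith)]; linarith
  filter_upwards [h.eventually (eventually_gt_nhds hlt)] with i hi
  rw [div_lt_div_iff₀ (by linarith) (hb i)] at hi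
  linarith

theorem Summable.of_tendsto_div_one {a b : ℕ → ℝ} (hb : ∀ n, 0 < b n)
    (h : Tendsto (fun n => a n / b n) atTop (𝓝 1)) (ha : Summable a) : Summable b := by
  refine .of_norm_bounded_eventually_nat (ha.mul_left 2) ?_
  filter_upwards [eventually_le_one_add_mul_of_tendsto_div hb h one_pos] with n hn
  rw [Real.norm_of_nonneg (hb n).le]
  linarith

theorem summable_of_eventually_le_sub_add {a d e : ℕ → ℝ} (ha : ∀ n, 0 ≤ a n) (hd : ∀ n, 0 ≤ d n)
    (he : Summable e) (he₀ : ∀ n, 0 ≤ e n) (h : ∀ᶠ n in atTop, a n ≤ d n - d (n + 1) + e n) :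
    Summable a := by
  obtain ⟨N, hN⟩ := eventually_atTop.1 h
  have heN : Summable fun k => e (k + N) := (summable_nat_add_iff N).2 he
  rw [← summable_nat_add_iff N]
  refine summable_of_sum_range_le (c := d N + ∑' k, e (k + N)) (fun k => ha _) fun m => ?_
  calc ∑ k ∈ range m, a (k + N)
      ≤ ∑ k ∈ range m, (d (k + N) - d (k + 1 + N) + e (k + N)) :=
        sum_le_sum fun k _ => by rw [add_right_comm]; exact hN _ (Nat.le_add_left N k)
    _ = d N - d (m + N) + ∑ k ∈ range m, e (k + N) := by
        rw [sum_add_distrib, sum_range_sub' (fun k => d (k + N)), zero_add]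
    _ ≤ d N + ∑' k, e (k + N) := by
        gcongr
        · linarith [hd (m + N)]
        · exact heN.sum_le_tsum _ fun k _ => he₀ _

theorem mul_sub_sub_le_mul_sub {a b w u v : ℝ} (haw : a ≤ w) (hwb : w ≤ b) (hu : 0 ≤ u)
    (hv : 0 ≤ v) : a * (u - v) - (b - a) * v ≤ w * (u - v) := by
  rcases le_total v u with huv | huv
  · nlinarith [mul_nonneg (sub_nonneg.2 haw) (sub_nonneg.2 huv)]
  · nlinarith [mul_nonneg (sub_nonneg.2 hwb) (sub_nonneg.2 huv)]

theorem mul_sum_sub_sub_le_sum_mul_sub {ι : Type*} {s : Finset ι} {a b : ℝ} {w u v : ι → ℝ}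
    (hw : ∀ i ∈ s, w i ∈ Set.Icc a b) (hu : ∀ i ∈ s, 0 ≤ u i) (hv : ∀ i ∈ s, 0 ≤ v i) :
    a * (∑ i ∈ s, u i - ∑ i ∈ s, v i) - (b - a) * ∑ i ∈ s, v i ≤ ∑ i ∈ s, w i * (u i - v i) := by
  rw [← sum_sub_distrib, mul_sum, mul_sum, ← sum_sub_distrib]
  exact sum_le_sum fun i hi => mul_sub_sub_le_mul_sub (hw i hi).1 (hw i hi).2 (hu i hi) (hv i hi)

theorem frequently_lt_add_of_descent {d F lo hi : ℕ → ℝ} {c α B : ℝ} (hd : ∀ n, 0 ≤ d n)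
    (hc : 0 ≤ c) (hα : 0 < α) (hB : 0 ≤ B) (hlo : ∀ n, 0 ≤ lo n) (hhi : ∀ n, 0 < hi n)
    (hdiv : ¬ Summable hi) (hsq : Summable fun n => hi n ^ 2)
    (hratio : Tendsto (fun n => lo n / hi n) atTop (𝓝 1))
    (hstep : ∀ n, d (n + 1) ≤ d n - α * (lo n * (F n - c) - (hi n - lo n) * c) + hi n ^ 2 * B)
    {ε : ℝ} (hε : 0 < ε) : ∃ᶠ n in atTop, F n < c + ε := by
  by_contra hcon
  simp only [not_frequently, not_lt] at hcon
  set δ := ε / (2 * (c + 1)) with hδ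
  have hδc : δ * c ≤ ε / 2 := by
    rw [hδ, div_mul_eq_mul_div, div_le_div_iff₀ (by positivity) two_pos]
    nlinarith
  have hdescent : ∀ᶠ n in atTop, α * ε / 2 * lo n ≤ d n - d (n + 1) + hi n ^ 2 * B := by
    filter_upwards [hcon, eventually_le_one_add_mul_of_tendsto_div hhi hratio
      (by positivity : 0 < δ)] with n hF hr
    have hgain : ε / 2 * lo n ≤ lo n * (F n - c) - (hi n - lo n) * c := by
      nlinarith [hlo n, mul_le_mul_of_nonneg_left hδc (hlo n)]
    nlinarith [hstep n, mul_le_mul_of_nonneg_left hgain hα.le]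
  have hsum := summable_of_eventually_le_sub_add (fun n => by have := hlo n; positivity) hd
    (hsq.mul_right B) (fun n => by positivity) hdescent
  exact hdiv (.of_tendsto_div_one hhi hratio ((summable_mul_left_iff (by positivity)).1 hsum))

theorem Filter.liminf_eq_of_le_of_frequently_lt {ι : Type*} {l : Filter ι} {u : ι → ℝ} {c : ℝ}
    (hle : ∀ i, c ≤ u i) (hfreq : ∀ ε > 0, ∃ᶠ i in l, u i < c + ε) : l.liminf u = c := by
  have hbdd : IsBoundedUnder (· ≥ ·) l u := isBoundedUnder_of ⟨c, hle⟩
  refine le_antisymm (le_of_forall_pos_le_add fun ε hε => ?_) ?_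
  · exact liminf_le_of_frequently_le ((hfreq ε hε).mono fun _ h => h.le) hbdd
  · exact le_liminf_of_le (.of_frequently_le ((hfreq 1 one_pos).mono fun _ h => h.le))
      (.of_forall hle)

theorem liminf_eq_min_of_descent_general {H : Type*} [NormedAddCommGroup H] (C : Set H) (K : ℕ)
    (f : ℕ → H → ℝ) (hfnn : ∀ i x, 0 ≤ f i x) (M : ℝ)
    (lo hi : ℕ → ℝ) (hlo : ∀ n, 0 < lo n) (hlohi : ∀ n, lo n ≤ hi n)
    (hdiv : ¬ Summable hi) (hsq : Summable (fun n => hi n ^ 2))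
    (hratio : Tendsto (fun n => lo n / hi n) atTop (𝓝 1))
    (lam : ℕ → ℕ → ℝ) (hlam : ∀ n i, 1 ≤ i → i ≤ K → lam n i ∈ Set.Icc (lo n) (hi n))
    (x : ℕ → H) (hxC : ∀ n, x n ∈ C)
    (alpha : ℝ) (halpha : 0 < alpha)
    (hineq : ∀ y ∈ C, ∀ n : ℕ,
      ‖x (n + 1) - y‖ ^ 2 ≤ ‖x n - y‖ ^ 2 -
        2 * alpha * ∑ i ∈ Finset.Icc 1 K, lam n i * (f i (x n) - f i y) + hi n ^ 2 * M ^ 2)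
    (yhat : H) (hyhat : yhat ∈ C)
    (hmin : ∀ z ∈ C, ∑ i ∈ Finset.Icc 1 K, f i yhat ≤ ∑ i ∈ Finset.Icc 1 K, f i z) :
    Filter.atTop.liminf (fun n => ∑ i ∈ Finset.Icc 1 K, f i (x n)) =
      ∑ i ∈ Finset.Icc 1 K, f i yhat := by
  set F := fun n => ∑ i ∈ Icc 1 K, f i (x n)
  set Fmin := ∑ i ∈ Icc 1 K, f i yhat
  have hstep (n : ℕ) : ‖x (n + 1) - yhat‖ ^ 2 ≤ ‖x n - yhat‖ ^ 2 -
      2 * alpha * (lo n * (F n - Fmin) - (hi n - lo n) * Fmin) + hi n ^ 2 * M ^ 2 := by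
    refine (hineq yhat hyhat n).trans ?_
    gcongr
    exact mul_sum_sub_sub_le_sum_mul_sub (fun i hi => hlam n i (mem_Icc.1 hi).1 (mem_Icc.1 hi).2)
      (fun i _ => hfnn i _) (fun i _ => hfnn i _)
  refine liminf_eq_of_le_of_frequently_lt (fun n => hmin _ (hxC n)) fun ε hε => ?_
  exact frequently_lt_add_of_descent (d := fun n => ‖x n - yhat‖ ^ 2) (α := 2 * alpha)
    (fun n => sq_nonneg _) (sum_nonneg fun i _ => hfnn i _) (by positivity) (sq_nonneg M)
    (fun n => (hlo n).le) (fun n => (hlo n).trans_le (hlohi n)) hdiv hsq hratio hstep hε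

theorem liminf_eq_min_of_descent {H : Type*} [NormedAddCommGroup H] [InnerProductSpace ℝ H]
    [CompleteSpace H] (C : Set H) (hCne : C.Nonempty) (hCcl : IsClosed C) (hCcv : Convex ℝ C)
    (K : ℕ) (hK : 0 < K)
    (f : ℕ → H → ℝ) (hfnn : ∀ i x, 0 ≤ f i x)
    (hfconv : ∀ i, ConvexOn ℝ Set.univ (f i)) (hfcont : ∀ i, Continuous (f i))
    (M : ℝ) (hM : 0 < M)
    (lo hi : ℕ → ℝ) (hlo : ∀ n, 0 < lo n) (hlohi : ∀ n, lo n ≤ hi n)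
    (hdiv : ¬ Summable hi) (hsq : Summable (fun n => hi n ^ 2))
    (hratio : Tendsto (fun n => lo n / hi n) atTop (𝓝 1))
    (lam : ℕ → ℕ → ℝ) (hlam : ∀ n i, 1 ≤ i → i ≤ K → lam n i ∈ Set.Icc (lo n) (hi n))
    (x : ℕ → H) (hxC : ∀ n, x n ∈ C)
    (alpha : ℝ) (halpha : 0 < alpha)
    (hineq : ∀ y ∈ C, ∀ n : ℕ,
      ‖x (n + 1) - y‖ ^ 2 ≤ ‖x n - y‖ ^ 2 -
        2 * alpha * ∑ i ∈ Finset.Icc 1 K, lam n i * (f i (x n) - f i y) + hi n ^ 2 * M ^ 2)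
    (yhat : H) (hyhat : yhat ∈ C)
    (hmin : ∀ z ∈ C, ∑ i ∈ Finset.Icc 1 K, f i yhat ≤ ∑ i ∈ Finset.Icc 1 K, f i z) :
    Filter.atTop.liminf (fun n => ∑ i ∈ Finset.Icc 1 K, f i (x n)) =
      ∑ i ∈ Finset.Icc 1 K, f i yhat :=
  liminf_eq_min_of_descent_general C K f hfnn M lo hi hlo hlohi hdiv hsq hratio lam hlam x hxC alpha
    halpha hineq yhat hyhat hmin
end

section
/- Under the hypotheses of the liminf lemma (the sequence {x_n} ⊂ C satisfies ‖x_{n+1} − y‖² ≤ ‖x_n − y‖² − 2α ∑_i λ_{n,i}(f_i(x_n) − f_i(y)) + λ̄_n² M² for all y ∈ C, with f_i ≥ 0, λ_{n,i} ∈ [λ̲_n, λ̄_n], ∑ λ̄_n = ∞, ∑ λ̄_n² < ∞), one has liminf_{n→∞} ∑_{i=1}^K (λ_{n,i}/λ̄_n) f_i(x_n) ≤ min_{x∈C} f(x). -/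
/-! If the weighted values stayed `ε` above `f ŷ` from some index on, the quasi-Fejér inequality
at `y = ŷ` would decrease `‖x n - ŷ‖²` by at least `2αε λ̄ₙ - λ̄ₙ² M²` at every step. Since the
`λ̄ₙ²` are summable and the distances are nonnegative, this forces `∑ λ̄ₙ < ∞`, a contradiction. -/

open Filter Topology Finset

theorem summable_of_le_sub_mul_add {d t e : ℕ → ℝ} {c : ℝ} (hc : 0 < c) (hd : ∀ n, 0 ≤ d n)
    (ht : ∀ n, 0 ≤ t n) (he : Summable e) (he0 : ∀ n, 0 ≤ e n)
    (h : ∀ n, d (n + 1) ≤ d n - c * t n + e n) : Summable t := by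
  refine summable_of_sum_range_le (c := (d 0 + ∑' k, e k) / c) ht fun m => ?_
  have telescope : c * ∑ k ∈ range m, t k ≤ d 0 - d m + ∑ k ∈ range m, e k := by
    rw [mul_sum, ← sum_range_sub' d, ← sum_add_distrib]
    exact sum_le_sum fun k _ => by linarith [h k]
  have partial_le : ∑ k ∈ range m, e k ≤ ∑' k, e k := he.sum_le_tsum _ fun k _ => he0 k
  rw [← mul_le_mul_iff_of_pos_left hc, mul_div_cancel₀ _ hc.ne']
  linarith [hd m]

theorem summable_of_eventually_le_sub_mul_add {d t e : ℕ → ℝ} {c : ℝ} (hc : 0 < c)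
    (hd : ∀ n, 0 ≤ d n) (ht : ∀ n, 0 ≤ t n) (he : Summable e) (he0 : ∀ n, 0 ≤ e n)
    (h : ∀ᶠ n in atTop, d (n + 1) ≤ d n - c * t n + e n) : Summable t := by
  obtain ⟨N, hN⟩ := eventually_atTop.mp h
  refine (summable_nat_add_iff N).mp <|
    summable_of_le_sub_mul_add (d := fun n => d (n + N)) (e := fun n => e (n + N)) hc
      (fun n => hd _) (fun n => ht _) ((summable_nat_add_iff N).mpr he) (fun n => he0 _)
      fun n => ?_
  simpa only [Nat.add_right_comm n 1 N] using hN (n + N) (Nat.le_add_left N n)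

/-- The junk value `liminf u = 0` of an unbounded sequence is why `0 ≤ b` is needed. -/
theorem Real.liminf_le_of_forall_eventually_le {ι : Type*} {l : Filter ι} {u : ι → ℝ} {b : ℝ}
    (hb : 0 ≤ b) (h : ∀ a, (∀ᶠ n in l, a ≤ u n) → a ≤ b) : l.liminf u ≤ b := by
  rw [liminf_eq]
  exact Real.sSup_le h hb

theorem mul_sub_sum_le_sum_mul_sub {ι : Type*} (s : Finset ι) {w g u : ι → ℝ} {h a : ℝ}
    (hh : 0 < h) (hw : ∀ i ∈ s, w i ≤ h) (hu : ∀ i ∈ s, 0 ≤ u i)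
    (ha : a ≤ ∑ i ∈ s, w i / h * g i) :
    h * (a - ∑ i ∈ s, u i) ≤ ∑ i ∈ s, w i * (g i - u i) := by
  have weighted : h * ∑ i ∈ s, w i / h * g i = ∑ i ∈ s, w i * g i := by
    rw [mul_sum]
    exact sum_congr rfl fun i _ => by field_simp
  have penalty : ∑ i ∈ s, w i * u i ≤ h * ∑ i ∈ s, u i := by
    rw [mul_sum]
    exact sum_le_sum fun i hi => mul_le_mul_of_nonneg_right (hw i hi) (hu i hi)
  have scaled : h * a ≤ ∑ i ∈ s, w i * g i := weighted ▸ mul_le_mul_of_nonneg_left ha hh.le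
  simp only [mul_sub, sum_sub_distrib]
  linarith

theorem liminf_weighted_le_min_general {H : Type*} [NormedAddCommGroup H] (C : Set H)
    (K : ℕ)
    (f : ℕ → H → ℝ) (hfnn : ∀ i x, 0 ≤ f i x)
    (M : ℝ)
    (lo hi : ℕ → ℝ) (hlo : ∀ n, 0 < lo n) (hlohi : ∀ n, lo n ≤ hi n)
    (hdiv : ¬ Summable hi) (hsq : Summable (fun n => hi n ^ 2))
    (lam : ℕ → ℕ → ℝ) (hlam : ∀ n i, 1 ≤ i → i ≤ K → lam n i ∈ Set.Icc (lo n) (hi n))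
    (x : ℕ → H)
    (alpha : ℝ) (halpha : 0 < alpha)
    (hineq : ∀ y ∈ C, ∀ n : ℕ,
      ‖x (n + 1) - y‖ ^ 2 ≤ ‖x n - y‖ ^ 2 -
        2 * alpha * ∑ i ∈ Finset.Icc 1 K, lam n i * (f i (x n) - f i y) + hi n ^ 2 * M ^ 2)
    (yhat : H) (hyhat : yhat ∈ C) :
    Filter.atTop.liminf (fun n => ∑ i ∈ Finset.Icc 1 K, (lam n i / hi n) * f i (x n)) ≤
      ∑ i ∈ Finset.Icc 1 K, f i yhat := by
  have hhi : ∀ n, 0 < hi n := fun n => (hlo n).trans_le (hlohi n)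
  refine Real.liminf_le_of_forall_eventually_le (sum_nonneg fun i _ => hfnn i yhat) fun a ha => ?_
  by_contra! hgap
  have descent : ∀ᶠ n in atTop, ‖x (n + 1) - yhat‖ ^ 2 ≤
      ‖x n - yhat‖ ^ 2 - 2 * alpha * (a - ∑ i ∈ Icc 1 K, f i yhat) * hi n + hi n ^ 2 * M ^ 2 := by
    filter_upwards [ha] with n han
    have gain := mul_sub_sum_le_sum_mul_sub (Icc 1 K) (hhi n)
      (fun i hmem => (hlam n i (mem_Icc.mp hmem).1 (mem_Icc.mp hmem).2).2) (fun i _ => hfnn i yhat) han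
    linarith [hineq yhat hyhat n, mul_le_mul_of_nonneg_left gain (by positivity : 0 ≤ 2 * alpha)]
  have hgain : 0 < 2 * alpha * (a - ∑ i ∈ Icc 1 K, f i yhat) := by
    have := sub_pos.mpr hgap
    positivity
  exact hdiv <| summable_of_eventually_le_sub_mul_add (d := fun n => ‖x n - yhat‖ ^ 2) hgain
    (fun _ => by positivity) (fun n => (hhi n).le) (hsq.mul_right (M ^ 2)) (fun n => by positivity)
    descent

theorem liminf_weighted_le_min {H : Type*} [NormedAddCommGroup H] [InnerProductSpace ℝ H]
    [CompleteSpace H] (C : Set H) (hCne : C.Nonempty) (hCcl : IsClosed C) (hCcv : Convex ℝ C)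
    (K : ℕ) (hK : 0 < K)
    (f : ℕ → H → ℝ) (hfnn : ∀ i x, 0 ≤ f i x)
    (hfconv : ∀ i, ConvexOn ℝ Set.univ (f i)) (hfcont : ∀ i, Continuous (f i))
    (M : ℝ) (hM : 0 < M)
    (lo hi : ℕ → ℝ) (hlo : ∀ n, 0 < lo n) (hlohi : ∀ n, lo n ≤ hi n)
    (hdiv : ¬ Summable hi) (hsq : Summable (fun n => hi n ^ 2))
    (lam : ℕ → ℕ → ℝ) (hlam : ∀ n i, 1 ≤ i → i ≤ K → lam n i ∈ Set.Icc (lo n) (hi n))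
    (x : ℕ → H) (hxC : ∀ n, x n ∈ C)
    (alpha : ℝ) (halpha : 0 < alpha)
    (hineq : ∀ y ∈ C, ∀ n : ℕ,
      ‖x (n + 1) - y‖ ^ 2 ≤ ‖x n - y‖ ^ 2 -
        2 * alpha * ∑ i ∈ Finset.Icc 1 K, lam n i * (f i (x n) - f i y) + hi n ^ 2 * M ^ 2)
    (yhat : H) (hyhat : yhat ∈ C)
    (hmin : ∀ z ∈ C, ∑ i ∈ Finset.Icc 1 K, f i yhat ≤ ∑ i ∈ Finset.Icc 1 K, f i z) :
    Filter.atTop.liminf (fun n => ∑ i ∈ Finset.Icc 1 K, (lam n i / hi n) * f i (x n)) ≤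
      ∑ i ∈ Finset.Icc 1 K, f i yhat :=
  liminf_weighted_le_min_general C K f hfnn M lo hi hlo hlohi hdiv hsq lam hlam x alpha halpha hineq
    yhat hyhat
end
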